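/- On ℝ¹² with coordinates z = (x,v,y,w) ∈ (ℝ³)⁴, let γ ∈ ℝ, α(z) := |v−w|^{γ}, and for k = 1,2,3 let b̃_k(z) := (0, b_k, 0, −b_k) where b_k = e_k × (v−w); let ξ̂_i := (0,e_i,0,−e_i) for i = 1,2,3. Then on the open set {z : v ≠ w}: [ξ̂_i, b̃_i] = 0 for each i; [ξ̂₁, b̃₂] = −2ξ̂₃, [ξ̂₂, b̃₁] = 2ξ̂₃, [ξ̂₁, b̃₃] = 2ξ̂₂, [ξ̂₃, b̃₁] = −2ξ̂₂, [ξ̂₃, b̃₂] = 2ξ̂₁, [ξ̂₂, b̃₃] = −2ξ̂₁; and moreover for all i, k: [ξ̂_i, √α b̃_k] = √α [ξ̂_i, b̃_k] + γ (v_i − w_i) |v−w|^{γ/2 − 2} b̃_k. -/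

import Mathlib

open MeasureTheory Real

noncomputable section

abbrev E3 : Type := EuclideanSpace ℝ (Fin 3)

/-- Phase space for a pair of particles: `z = (x, v, y, w)`. -/
abbrev Z12 : Type := E3 × E3 × E3 × E3

/-- `b_k(u) := e_k × u`. -/
def bvec (k : Fin 3) (u : E3) : E3 :=
  (EuclideanSpace.equiv (Fin 3) ℝ).symm
    (![![0, -(u 2), u 1], ![u 2, 0, -(u 0)], ![-(u 1), u 0, 0]] k)

/-- The lifted vector field `b̃_k(z) = (0, b_k(v-w), 0, -b_k(v-w))`. -/
def btil (k : Fin 3) (z : Z12) : Z12 :=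
  (0, bvec k (z.2.1 - z.2.2.2), 0, -bvec k (z.2.1 - z.2.2.2))

/-- `√α(z) = |v-w|^{γ/2}`. -/
def sqalpha (γ : ℝ) (z : Z12) : ℝ := ‖z.2.1 - z.2.2.2‖ ^ (γ / 2)

/-- Constant vector field `ξ̂_i = (0, e_i, 0, -e_i)`. -/
def xihat (i : Fin 3) : Z12 → Z12 :=
  fun _ => (0, EuclideanSpace.single i 1, 0, -EuclideanSpace.single i 1)

/-- The commutator of vector fields `[a,b]_i = Σ_j (a_j ∂_j b_i - b_j ∂_j a_i)`. -/
def vcomm (a b : Z12 → Z12) (z : Z12) : Z12 :=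
  fderiv ℝ b z (a z) - fderiv ℝ a z (b z)


namespace Statement16Aux

/-- The continuous linear map `z ↦ v - w`. -/
def vwL : Z12 →L[ℝ] E3 :=
  (ContinuousLinearMap.fst ℝ E3 (E3 × E3)).comp (ContinuousLinearMap.snd ℝ E3 (E3 × E3 × E3)) -
  (ContinuousLinearMap.snd ℝ E3 E3).comp ((ContinuousLinearMap.snd ℝ E3 (E3 × E3)).comp
    (ContinuousLinearMap.snd ℝ E3 (E3 × E3 × E3)))

lemma vwL_apply (z : Z12) : vwL z = z.2.1 - z.2.2.2 := by simp [vwL]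

/-- `bvec k` as a continuous linear map. -/
def bL (k : Fin 3) : E3 →L[ℝ] E3 :=
  LinearMap.toContinuousLinearMap
  { toFun := bvec k
    map_add' := by
      intro u v; ext j; fin_cases k <;> fin_cases j <;> simp [bvec] <;> ring
    map_smul' := by
      intro c u; ext j; fin_cases k <;> fin_cases j <;> simp [bvec] }

lemma bL_apply (k : Fin 3) (u : E3) : bL k u = bvec k u := rfl

/-- `btil k` as a continuous linear map. -/
def BL (k : Fin 3) : Z12 →L[ℝ] Z12 :=
  (0 : Z12 →L[ℝ] E3).prod (((bL k).comp vwL).prod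
    ((0 : Z12 →L[ℝ] E3).prod (-((bL k).comp vwL))))

lemma btil_eq (k : Fin 3) : btil k = fun z => BL k z := by
  funext z
  simp [btil, BL, vwL_apply, bL_apply]

lemma hbtil (k : Fin 3) (z : Z12) : HasFDerivAt (btil k) (BL k) z := by
  rw [btil_eq]; exact (BL k).hasFDerivAt

lemma fderiv_xihat (i : Fin 3) (z : Z12) : fderiv ℝ (xihat i) z = 0 :=
  fderiv_const_apply _

lemma vcomm_xb (i k : Fin 3) (z : Z12) :
    vcomm (xihat i) (btil k) z = btil k (xihat i z) := by
  unfold vcomm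
  rw [(hbtil k z).fderiv, fderiv_xihat]
  simp [btil_eq]

lemma leibniz (γ : ℝ) (z : Z12) (hz : z.2.1 ≠ z.2.2.2) (i k : Fin 3) :
    vcomm (xihat i) (fun z' => sqalpha γ z' • btil k z') z =
      sqalpha γ z • vcomm (xihat i) (btil k) z +
        (γ * (z.2.1 - z.2.2.2) i * ‖z.2.1 - z.2.2.2‖ ^ (γ / 2 - 2)) • btil k z := by
  have hune : z.2.1 - z.2.2.2 ≠ 0 := sub_ne_zero.mpr hz
  have hvz : vwL z = z.2.1 - z.2.2.2 := vwL_apply z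
  have hg : HasFDerivAt (fun z' : Z12 => ‖vwL z'‖ ^ 2)
      (2 • (innerSL ℝ (vwL z)).comp vwL) z :=
    vwL.hasFDerivAt.norm_sq
  have hne2 : ‖vwL z‖ ^ 2 ≠ 0 :=
    pow_ne_zero 2 (by rw [hvz]; exact norm_ne_zero_iff.mpr hune)
  have hfun : (fun x : Z12 => (‖vwL x‖ ^ 2) ^ (γ/4)) = sqalpha γ := by
    funext x
    rw [vwL_apply, sqalpha, ← Real.rpow_natCast ‖_‖ 2, ← Real.rpow_mul (norm_nonneg _)]
    norm_num
    congr 1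
    ring
  have hsq : HasFDerivAt (sqalpha γ)
      ((γ/4 * (‖vwL z‖ ^ 2) ^ (γ/4 - 1)) • (2 • (innerSL ℝ (vwL z)).comp vwL)) z :=
    hfun ▸ hg.rpow_const (Or.inl hne2)
  have hF : HasFDerivAt (fun z' => sqalpha γ z' • btil k z') _ z := hsq.smul (hbtil k z)
  rw [vcomm_xb]
  unfold vcomm
  rw [hF.fderiv, fderiv_xihat]
  have hCξ : ((γ/4 * (‖vwL z‖ ^ 2) ^ (γ/4 - 1)) • (2 • (innerSL ℝ (vwL z)).comp vwL))
      (xihat i z) = γ * (z.2.1 - z.2.2.2) i * ‖z.2.1 - z.2.2.2‖ ^ (γ / 2 - 2) := by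
    have h1 : vwL (xihat i z) = EuclideanSpace.single i 1 - -EuclideanSpace.single i 1 := by
      rw [vwL_apply]; rfl
    have h2 : (‖vwL z‖ ^ 2) ^ (γ/4 - 1) = ‖z.2.1 - z.2.2.2‖ ^ (γ / 2 - 2) := by
      rw [hvz, ← Real.rpow_natCast ‖_‖ 2, ← Real.rpow_mul (norm_nonneg _)]
      norm_num
      congr 1
      ring
    rw [h2]
    simp only [ContinuousLinearMap.smul_apply, ContinuousLinearMap.comp_apply, h1, hvz,
      innerSL_apply_apply, inner_sub_right, inner_neg_right,
      EuclideanSpace.inner_single_right, smul_eq_mul, starRingEnd_apply, star_trivial]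
    ring
  rw [ContinuousLinearMap.add_apply, ContinuousLinearMap.smulRight_apply, hCξ,
    ContinuousLinearMap.zero_apply, sub_zero, ContinuousLinearMap.smul_apply]
  simp [btil_eq]

end Statement16Aux

open Statement16Aux

/-- On `{v ≠ w}`: `[ξ̂_i, b̃_i] = 0`; the cyclic relations
`[ξ̂₁, b̃₂] = -2ξ̂₃`, `[ξ̂₂, b̃₁] = 2ξ̂₃`, `[ξ̂₁, b̃₃] = 2ξ̂₂`, `[ξ̂₃, b̃₁] = -2ξ̂₂`,
`[ξ̂₃, b̃₂] = 2ξ̂₁`, `[ξ̂₂, b̃₃] = -2ξ̂₁`; and the Leibniz-type formula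
`[ξ̂_i, √α b̃_k] = √α [ξ̂_i, b̃_k] + γ (v_i - w_i) |v-w|^{γ/2-2} b̃_k`. -/
theorem statement16 (γ : ℝ) (z : Z12) (hz : z.2.1 ≠ z.2.2.2) :
    (∀ i : Fin 3, vcomm (xihat i) (btil i) z = 0) ∧
    vcomm (xihat 0) (btil 1) z = (-2 : ℝ) • xihat 2 z ∧
    vcomm (xihat 1) (btil 0) z = (2 : ℝ) • xihat 2 z ∧
    vcomm (xihat 0) (btil 2) z = (2 : ℝ) • xihat 1 z ∧
    vcomm (xihat 2) (btil 0) z = (-2 : ℝ) • xihat 1 z ∧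
    vcomm (xihat 2) (btil 1) z = (2 : ℝ) • xihat 0 z ∧
    vcomm (xihat 1) (btil 2) z = (-2 : ℝ) • xihat 0 z ∧
    (∀ i k : Fin 3,
      vcomm (xihat i) (fun z' => sqalpha γ z' • btil k z') z =
        sqalpha γ z • vcomm (xihat i) (btil k) z +
          (γ * (z.2.1 - z.2.2.2) i * ‖z.2.1 - z.2.2.2‖ ^ (γ / 2 - 2)) • btil k z) := by
  refine ⟨fun i => ?_, ?_, ?_, ?_, ?_, ?_, ?_, fun i k => leibniz γ z hz i k⟩
  · rw [vcomm_xb]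
    unfold btil xihat
    refine Prod.ext ?_ (Prod.ext ?_ (Prod.ext ?_ ?_)) <;>
      · ext j; fin_cases i <;> fin_cases j <;> simp [bvec]
  all_goals
    rw [vcomm_xb]
    unfold btil xihat
    refine Prod.ext ?_ (Prod.ext ?_ (Prod.ext ?_ ?_)) <;>
      · ext j; fin_cases j <;> simp [bvec] <;> norm_num
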